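/- The R-span S^p of Z^p is a subalgebra of the cyclotomic q-Schur algebra S(Λ) containing its identity element; moreover, S^p is a standardly based algebra with standard basis Z^p over the poset Σ^p: Z^p is the disjoint union of the sets Z^p(ε) over ε ∈ Σ^p, and for every φ ∈ S^p and every φ_{ST} ∈ Z^p(ε) one has φ · φ_{ST} ≡ Σ_{S' ∈ I^p(ε)} f_{S'} φ_{S'T} mod (S^p)^{∨ε}, where each f_{S'} ∈ R depends only on (φ, S, S') and not on T, and φ_{ST} · φ ≡ Σ_{T' ∈ J^p(ε)} f'_{T'} φ_{ST'} mod (S^p)^{∨ε}, where each f'_{T'} ∈ R depends only on (φ, T, T') and not on S. -/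

import Mathlib

/-!
Common framework for the formalization of results of Shoji–Wada,
"Cyclotomic q-Schur algebras associated to the Ariki-Koike algebra".
-/

open scoped BigOperators TensorProduct
open MulOpposite

noncomputable section

/-! ## Multicompositions -/

/-- An `r`-multicomposition of `n`, whose `k`-th component is a composition
of length `≤ m k`. -/
structure MultiComp (n r : ℕ) (m : Fin r → ℕ) where
  part : (k : Fin r) → Fin (m k) → ℕ
  sum_eq : (∑ k, ∑ i, part k i) = n

namespace MultiComp

variable {n r : ℕ} {m : Fin r → ℕ}

theorem part_injective : Function.Injective (part : MultiComp n r m → _) := by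
  rintro ⟨a, _⟩ ⟨b, _⟩ h
  simpa using h

instance : DecidableEq (MultiComp n r m) := fun a b =>
  decidable_of_iff (a.part = b.part) part_injective.eq_iff

theorem part_le_n (lam : MultiComp n r m) (k : Fin r) (i : Fin (m k)) :
    lam.part k i ≤ n := by
  calc lam.part k i ≤ ∑ i, lam.part k i :=
        Finset.single_le_sum (fun _ _ => Nat.zero_le _) (Finset.mem_univ i)
    _ ≤ ∑ k, ∑ i, lam.part k i :=
        Finset.single_le_sum (f := fun k => ∑ i, lam.part k i)
          (fun _ _ => Nat.zero_le _) (Finset.mem_univ k)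
    _ = n := lam.sum_eq

instance : Fintype (MultiComp n r m) :=
  Fintype.ofInjective
    (fun lam (k : Fin r) (i : Fin (m k)) =>
      (⟨lam.part k i, Nat.lt_succ_of_le (part_le_n lam k i)⟩ : Fin (n + 1)))
    (fun a b h => part_injective (by
      funext k i
      exact congrArg Fin.val (congrFun (congrFun h k) i)))

/-- an `r`-multipartition: every component is weakly decreasing -/
def IsPartition (lam : MultiComp n r m) : Prop :=
  ∀ (k : Fin r) (i j : Fin (m k)), i ≤ j → lam.part k j ≤ lam.part k i

instance (lam : MultiComp n r m) : Decidable lam.IsPartition := by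
  unfold IsPartition; infer_instance

/-- the size `|λ^{(k)}|` of the `k`-th component -/
def compSize (lam : MultiComp n r m) (k : Fin r) : ℕ := ∑ i, lam.part k i

/-- the dominance order `λ ⊵ μ` on multicompositions -/
def Dominates (lam mu : MultiComp n r m) : Prop :=
  ∀ (k : Fin r) (i : Fin (m k)),
    ((∑ c ∈ Finset.univ.filter fun c => c < k, mu.compSize c) +
        ∑ j ∈ Finset.univ.filter fun j => j ≤ i, mu.part k j) ≤
      (∑ c ∈ Finset.univ.filter fun c => c < k, lam.compSize c) +
        ∑ j ∈ Finset.univ.filter fun j => j ≤ i, lam.part k j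

/-- the strict dominance order `λ ⊳ μ` -/
def SDominates (lam mu : MultiComp n r m) : Prop :=
  Dominates lam mu ∧ lam ≠ mu

end MultiComp

/-- `Λ` is a saturated set of multicompositions: it contains every multipartition
dominating one of its members. -/
def Saturated {n r : ℕ} {m : Fin r → ℕ} (Λ : Finset (MultiComp n r m)) : Prop :=
  ∀ lam : MultiComp n r m, lam.IsPartition →
    (∃ mu ∈ Λ, MultiComp.Dominates lam mu) → lam ∈ Λ

/-! ## Tableaux -/

/-- the set of entries `(i,k)` (row `i` of component `k`) for tableaux -/
abbrev MCEntry (r : ℕ) (m : Fin r → ℕ) := Σ k : Fin r, Fin (m k)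

/-- the total order on entries: `(i₁,k₁) ≤ (i₂,k₂)` iff `k₁ < k₂`, or `k₁ = k₂` and
`i₁ ≤ i₂`. -/
def entryLE {r : ℕ} {m : Fin r → ℕ} (a b : MCEntry r m) : Prop :=
  a.1 < b.1 ∨ (a.1 = b.1 ∧ (a.2 : ℕ) ≤ (b.2 : ℕ))

/-- the associated strict order on entries -/
def entryLT {r : ℕ} {m : Fin r → ℕ} (a b : MCEntry r m) : Prop :=
  a.1 < b.1 ∨ (a.1 = b.1 ∧ (a.2 : ℕ) < (b.2 : ℕ))

/-- the cells `(k, i, j)` (component `k`, row `i`, column `j`) of the Young diagram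
of a multicomposition -/
abbrev MultiComp.Cell {n r : ℕ} {m : Fin r → ℕ} (lam : MultiComp n r m) :=
  Σ (k : Fin r) (i : Fin (m k)), Fin (lam.part k i)

/-- Semistandard tableaux of shape `lam` and type `mu` in the sense of
Dipper–James–Mathas: rows weakly increase, columns strictly increase, the entries of
the `k`-th component have second coordinate `≥ k`, and for each entry `(i,k)` the
number of cells carrying it equals `mu.part k i`. -/
structure SSTab {n r : ℕ} {m : Fin r → ℕ} (lam mu : MultiComp n r m) where
  entry : lam.Cell → MCEntry r m
  rowWeak : ∀ (k : Fin r) (i : Fin (m k)) (j j' : Fin (lam.part k i)),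
    j ≤ j' → entryLE (entry ⟨k, i, j⟩) (entry ⟨k, i, j'⟩)
  colStrict : ∀ (k : Fin r) (i i' : Fin (m k)) (j : ℕ)
    (hj : j < lam.part k i) (hj' : j < lam.part k i'), i < i' →
    entryLT (entry ⟨k, i, ⟨j, hj⟩⟩) (entry ⟨k, i', ⟨j, hj'⟩⟩)
  compLE : ∀ c : lam.Cell, c.1 ≤ (entry c).1
  typeCount : ∀ e : MCEntry r m,
    mu.part e.1 e.2 = Fintype.card {c : lam.Cell // entry c = e}

namespace SSTab

variable {n r : ℕ} {m : Fin r → ℕ} {lam mu : MultiComp n r m}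

theorem entry_injective : Function.Injective (entry : SSTab lam mu → _) := by
  rintro ⟨a, _, _, _, _⟩ ⟨b, _, _, _, _⟩ h
  simpa using h

instance : Fintype (SSTab lam mu) := Fintype.ofInjective entry entry_injective

instance : DecidableEq (SSTab lam mu) := fun a b =>
  decidable_of_iff (a.entry = b.entry) entry_injective.eq_iff

end SSTab

/-- Standard tableaux of shape `lam`: bijective fillings of the diagram by the
letters `1, …, n`, increasing along rows and down columns. -/
structure StdTab {n r : ℕ} {m : Fin r → ℕ} (lam : MultiComp n r m) where
  entry : lam.Cell → Fin n
  bij : Function.Bijective entry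
  rowStrict : ∀ (k : Fin r) (i : Fin (m k)) (j j' : Fin (lam.part k i)),
    j < j' → entry ⟨k, i, j⟩ < entry ⟨k, i, j'⟩
  colStrict : ∀ (k : Fin r) (i i' : Fin (m k)) (j : ℕ)
    (hj : j < lam.part k i) (hj' : j < lam.part k i'), i < i' →
    entry ⟨k, i, ⟨j, hj⟩⟩ < entry ⟨k, i', ⟨j, hj'⟩⟩

namespace StdTab

variable {n r : ℕ} {m : Fin r → ℕ} {lam : MultiComp n r m}

theorem entry_injective : Function.Injective (entry : StdTab lam → _) := by
  rintro ⟨a, _, _, _⟩ ⟨b, _, _, _⟩ h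
  simpa using h

instance : Fintype (StdTab lam) := Fintype.ofInjective entry entry_injective

end StdTab
/-! ## The block structure attached to `p = (r₁, …, r_g)` -/

/-- componentwise comparison of vectors in `ℤ_{≥0}^g` -/
def vecLE {g : ℕ} (f h : Fin g → ℕ) : Prop := ∀ b, f b ≤ h b

instance {g : ℕ} (f h : Fin g → ℕ) : Decidable (vecLE f h) := by
  unfold vecLE; infer_instance

/-- strict componentwise comparison: `f ≤ h` componentwise and `f ≠ h` -/
def vecLT {g : ℕ} (f h : Fin g → ℕ) : Prop := vecLE f h ∧ f ≠ h

instance {g : ℕ} (f h : Fin g → ℕ) : Decidable (vecLT f h) := by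
  unfold vecLT; infer_instance

/-- The datum of `p = (r₁, …, r_g)`, encoded by the map sending a component
`k ∈ {1, …, r}` to its block: the fibers of `π` are the intervals
`{p_b + 1, …, p_b + r_b}`, of sizes `r_b > 0`. -/
structure BlockCtx (r g : ℕ) where
  π : Fin r → Fin g
  mono : Monotone π
  surj : Function.Surjective π

namespace BlockCtx

variable {r g : ℕ} (P : BlockCtx r g) {n : ℕ} {m : Fin r → ℕ}

/-- `α_p(μ) = (n₁, …, n_g)`, `n_b = |μ^{[b]}|` -/
def alphaP (mu : MultiComp n r m) : Fin g → ℕ := fun b =>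
  ∑ k ∈ Finset.univ.filter fun k => P.π k = b, mu.compSize k

/-- `a_p(μ) = (a₁, …, a_g)`, `a_b = n₁ + ⋯ + n_{b-1}` -/
def aP (mu : MultiComp n r m) : Fin g → ℕ := fun b =>
  ∑ k ∈ Finset.univ.filter fun k => P.π k < b, mu.compSize k

/-- `r_b`, the number of components in block `b` -/
def rblk (b : Fin g) : ℕ := (Finset.univ.filter fun k => P.π k = b).card

/-- the components in block `b`, listed in increasing order -/
def blkEquiv (b : Fin g) :
    Fin (P.rblk b) ≃o {x // x ∈ Finset.univ.filter fun k => P.π k = b} :=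
  (Finset.univ.filter fun k => P.π k = b).orderIsoOfFin rfl

/-- `m^{[b]}`, the row bounds of block `b` -/
def mblk (m : Fin r → ℕ) (b : Fin g) : Fin (P.rblk b) → ℕ :=
  fun i => m ((P.blkEquiv b i : {x // x ∈ Finset.univ.filter fun k => P.π k = b}) : Fin r)

/-- the block component `μ^{[b]}` of a multicomposition, an `r_b`-multicomposition
of `n_b = α_p(μ)_b` -/
def restrictTo (mu : MultiComp n r m) (b : Fin g) (nb : ℕ)
    (h : P.alphaP mu b = nb) : MultiComp nb (P.rblk b) (P.mblk m b) where
  part := fun k i => mu.part ((P.blkEquiv b k :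
    {x // x ∈ Finset.univ.filter fun k => P.π k = b}) : Fin r) i
  sum_eq := by
    subst h
    calc (∑ k : Fin (P.rblk b), ∑ i, mu.part ((P.blkEquiv b k :
            {x // x ∈ Finset.univ.filter fun k => P.π k = b}) : Fin r) i)
        = ∑ x : {x // x ∈ Finset.univ.filter fun k => P.π k = b},
            mu.compSize (x : Fin r) :=
          Fintype.sum_equiv (P.blkEquiv b).toEquiv _ _ (fun _ => rfl)
      _ = ∑ k ∈ Finset.univ.filter fun k => P.π k = b, mu.compSize k :=
          Finset.sum_coe_sort _ _
      _ = P.alphaP mu b := rfl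

theorem restrictTo_isPartition (mu : MultiComp n r m) (hmu : mu.IsPartition)
    (b : Fin g) (nb : ℕ) (h : P.alphaP mu b = nb) :
    (P.restrictTo mu b nb h).IsPartition :=
  fun k i j hij => hmu _ i j hij

/-- the largest component index in block `b` (that is, `p_b + r_b`) -/
def blockLast (b : Fin g) : Fin r :=
  (Finset.univ.filter fun k => P.π k = b).max' (by
    obtain ⟨k, hk⟩ := P.surj b
    exact ⟨k, Finset.mem_filter.2 ⟨Finset.mem_univ _, hk⟩⟩)

end BlockCtx
/-! ## The cyclotomic q-Schur algebra with its Dipper–James–Mathas cellular basis -/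

/-- the multicompositions belonging to `Λ` -/
abbrev LamS {n r : ℕ} {m : Fin r → ℕ} (Λ : Finset (MultiComp n r m)) := {x // x ∈ Λ}

/-- `Λ⁺`, the multipartitions belonging to `Λ` -/
abbrev LamP {n r : ℕ} {m : Fin r → ℕ} (Λ : Finset (MultiComp n r m)) :=
  {x : MultiComp n r m // x ∈ Λ ∧ x.IsPartition}

/-- the index set of the Dipper–James–Mathas cellular basis
`{φ_{S,T} : S ∈ T₀(λ,μ), T ∈ T₀(λ,ν), λ ∈ Λ⁺, μ, ν ∈ Λ}` -/
abbrev DJMIndex {n r : ℕ} {m : Fin r → ℕ} (Λ : Finset (MultiComp n r m)) :=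
  Σ (lam : LamP Λ) (mu : LamS Λ) (nu : LamS Λ), SSTab lam.1 mu.1 × SSTab lam.1 nu.1

/-- Abstract datum of the cyclotomic q-Schur algebra `S(Λ) = End_H(⊕_{μ∈Λ} M^μ)`
together with its Dipper–James–Mathas cellular basis `φ_{S,T}`
(`bas ⟨λ, μ, ν, (S, T)⟩` is the basis element `φ_{S,T} ∈ Hom_H(M^ν, M^μ)` for
`S ∈ T₀(λ,μ)`, `T ∈ T₀(λ,ν)`), with its cellular anti-automorphism `*`
(`astar`), and the orthogonal idempotents `φ_μ = id_{M^μ}` (`phiId`). -/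
structure SchurAlgebra (R : Type) [CommRing R] {n r : ℕ} {m : Fin r → ℕ}
    (Λ : Finset (MultiComp n r m)) where
  carrier : Type
  [ringI : Ring carrier]
  [algI : Algebra R carrier]
  bas : Module.Basis (DJMIndex Λ) R carrier
  astar : carrier →ₗ[R] carrier
  astar_mul : ∀ x y : carrier, astar (x * y) = astar y * astar x
  astar_bas : ∀ (lam : LamP Λ) (mu nu : LamS Λ)
    (S : SSTab lam.1 mu.1) (T : SSTab lam.1 nu.1),
    astar (bas ⟨lam, mu, nu, (S, T)⟩) = bas ⟨lam, nu, mu, (T, S)⟩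
  phiId : LamS Λ → carrier
  phiId_sum : ∑ mu : LamS Λ, phiId mu = 1
  phiId_mul : ∀ mu nu : LamS Λ, phiId mu * phiId nu = if mu = nu then phiId mu else 0
  phiId_mul_bas : ∀ (lam : LamP Λ) (mu nu : LamS Λ) (S : SSTab lam.1 mu.1)
    (T : SSTab lam.1 nu.1) (rho : LamS Λ),
    phiId rho * bas ⟨lam, mu, nu, (S, T)⟩ =
      if rho = mu then bas ⟨lam, mu, nu, (S, T)⟩ else 0
  bas_mul_phiId : ∀ (lam : LamP Λ) (mu nu : LamS Λ) (S : SSTab lam.1 mu.1)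
    (T : SSTab lam.1 nu.1) (rho : LamS Λ),
    bas ⟨lam, mu, nu, (S, T)⟩ * phiId rho =
      if rho = nu then bas ⟨lam, mu, nu, (S, T)⟩ else 0
  cellular : ∀ (a : carrier) (lam : LamP Λ) (mu : LamS Λ) (S : SSTab lam.1 mu.1),
    ∃ c : (Σ mu' : LamS Λ, SSTab lam.1 mu'.1) → R,
      ∀ (nu : LamS Λ) (T : SSTab lam.1 nu.1),
        a * bas ⟨lam, mu, nu, (S, T)⟩ -
            ∑ x : Σ mu' : LamS Λ, SSTab lam.1 mu'.1,
              c x • bas ⟨lam, x.1, nu, (x.2, T)⟩ ∈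
          Submodule.span R
            {y : carrier | ∃ (lam' : LamP Λ) (mu' nu' : LamS Λ)
              (S' : SSTab lam'.1 mu'.1) (T' : SSTab lam'.1 nu'.1),
              MultiComp.SDominates lam'.1 lam.1 ∧
              y = bas ⟨lam', mu', nu', (S', T')⟩}

namespace SchurAlgebra

variable {R : Type} [CommRing R] {n r : ℕ} {m : Fin r → ℕ}
variable {Λ : Finset (MultiComp n r m)}

instance (SA : SchurAlgebra R Λ) : Ring SA.carrier := SA.ringI
instance (SA : SchurAlgebra R Λ) : Algebra R SA.carrier := SA.algI

/-- the two-sided ideal `S(Λ)^{∨λ}`, spanned by the `φ_{S,T}` of shape strictly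
dominating `λ` -/
def SVee (SA : SchurAlgebra R Λ) (lam : LamP Λ) : Submodule R SA.carrier :=
  Submodule.span R
    {y : SA.carrier | ∃ (lam' : LamP Λ) (mu' nu' : LamS Λ)
      (S' : SSTab lam'.1 mu'.1) (T' : SSTab lam'.1 nu'.1),
      MultiComp.SDominates lam'.1 lam.1 ∧ y = SA.bas ⟨lam', mu', nu', (S', T')⟩}

end SchurAlgebra

/-! ## The parabolic subalgebra `S^p` and its combinatorics -/

section PLayer

variable {R : Type} [CommRing R] {n r g : ℕ} {m : Fin r → ℕ}
variable {Λ : Finset (MultiComp n r m)}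

/-- a semistandard tableau of shape `λ` together with its type `μ`,
i.e. an element of `T₀(λ) = ⋃_{μ ∈ Λ} T₀(λ,μ)` -/
abbrev TabOf (Λ : Finset (MultiComp n r m)) (lam : LamP Λ) :=
  Σ mu : LamS Λ, SSTab lam.1 mu.1

/-- the condition defining `T₀^p(λ,μ) ⊆ T₀(λ,μ)`: `a_p(λ) = a_p(μ)` -/
def pCond (P : BlockCtx r g) (lam : LamP Λ) (x : TabOf Λ lam) : Prop :=
  P.aP x.1.1 = P.aP lam.1

instance (P : BlockCtx r g) (lam : LamP Λ) (x : TabOf Λ lam) :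
    Decidable (pCond P lam x) := by
  unfold pCond; infer_instance

/-- `T₀^p(λ)`, the tableaux whose type has the same `a_p` as the shape -/
abbrev PTab (P : BlockCtx r g) (lam : LamP Λ) := {x : TabOf Λ lam // pCond P lam x}

/-- `x` is the canonical tableau `T^λ = λ(t^λ)` of shape and type `λ` -/
def IsCanonical (lam : LamP Λ) (x : TabOf Λ lam) : Prop :=
  x.1.1 = lam.1 ∧ ∀ c : lam.1.Cell, x.2.entry c = ⟨c.1, c.2.1⟩

namespace SchurAlgebra

/-- the subset `Z^p` of the cellular basis: those `φ_{S,T}` with `S ∈ T₀(λ,μ)`,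
`T ∈ T₀(λ,ν)` such that `a_p(λ) > a_p(μ)` whenever `α_p(μ) ≠ α_p(ν)` -/
def ZpSet (SA : SchurAlgebra R Λ) (P : BlockCtx r g) : Set SA.carrier :=
  {x | ∃ (lam : LamP Λ) (mu nu : LamS Λ) (S : SSTab lam.1 mu.1) (T : SSTab lam.1 nu.1),
    (P.alphaP mu.1 ≠ P.alphaP nu.1 → vecLT (P.aP mu.1) (P.aP lam.1)) ∧
    x = SA.bas ⟨lam, mu, nu, (S, T)⟩}

/-- the subset `Z^p \ {φ_{S,T} : S, T ∈ T₀^p(λ)}` spanning the two-sided ideal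
`\hat S^p` of `S^p` -/
def ZpHatSet (SA : SchurAlgebra R Λ) (P : BlockCtx r g) : Set SA.carrier :=
  {x | ∃ (lam : LamP Λ) (mu nu : LamS Λ) (S : SSTab lam.1 mu.1) (T : SSTab lam.1 nu.1),
    (P.alphaP mu.1 ≠ P.alphaP nu.1 → vecLT (P.aP mu.1) (P.aP lam.1)) ∧
    ¬(P.aP mu.1 = P.aP lam.1 ∧ P.aP nu.1 = P.aP lam.1) ∧
    x = SA.bas ⟨lam, mu, nu, (S, T)⟩}

end SchurAlgebra

/-- the index set `Σ^p ⊆ Λ⁺ × {0,1}`, where `(λ,1)` is kept only if there exists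
`μ ∈ Λ` with `a_p(λ) > a_p(μ)` and `T₀(λ,μ) ≠ ∅` -/
def SigmaPIdx (Λ : Finset (MultiComp n r m)) (P : BlockCtx r g) :=
  {e : LamP Λ × Bool // e.2 = true →
    ∃ mu : LamS Λ, vecLT (P.aP mu.1) (P.aP e.1.1) ∧ Nonempty (SSTab e.1.1 mu.1)}

/-- the partial order on `Σ^p`: `(λ₁,ε₁) > (λ₂,ε₂)` iff `λ₁ ⊳ λ₂`, or `λ₁ = λ₂`
and `ε₁ > ε₂` -/
def sigmaGT (P : BlockCtx r g) (e f : SigmaPIdx Λ P) : Prop :=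
  MultiComp.SDominates e.1.1.1 f.1.1.1 ∨
    (e.1.1 = f.1.1 ∧ e.1.2 = true ∧ f.1.2 = false)

/-- the element `(λ, 0)` of `Σ^p` -/
def eZero (P : BlockCtx r g) (lam : LamP Λ) : SigmaPIdx Λ P :=
  ⟨(lam, false), fun h => (Bool.false_ne_true h).elim⟩

/-- the index set `I^p(ε)`: `T₀^p(λ)` for `ε = (λ,0)`, and
`⋃ {T₀(λ,μ) : a_p(λ) > a_p(μ)}` for `ε = (λ,1)` -/
def pIp (P : BlockCtx r g) (e : SigmaPIdx Λ P) : Set (TabOf Λ e.1.1) :=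
  {x | (e.1.2 = true ∧ vecLT (P.aP x.1.1) (P.aP e.1.1.1)) ∨
       (e.1.2 = false ∧ pCond P e.1.1 x)}

/-- the index set `J^p(ε)`: `T₀^p(λ)` for `ε = (λ,0)`, and `T₀(λ)` for `ε = (λ,1)` -/
def pJp (P : BlockCtx r g) (e : SigmaPIdx Λ P) : Set (TabOf Λ e.1.1) :=
  {x | e.1.2 = true ∨ pCond P e.1.1 x}

instance (P : BlockCtx r g) (e : SigmaPIdx Λ P) :
    DecidablePred (· ∈ pIp (Λ := Λ) P e) := fun x =>
  decidable_of_iff ((e.1.2 = true ∧ vecLT (P.aP x.1.1) (P.aP e.1.1.1)) ∨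
    (e.1.2 = false ∧ pCond P e.1.1 x)) Iff.rfl

instance (P : BlockCtx r g) (e : SigmaPIdx Λ P) :
    DecidablePred (· ∈ pJp (Λ := Λ) P e) := fun x =>
  decidable_of_iff (e.1.2 = true ∨ pCond P e.1.1 x) Iff.rfl

namespace SchurAlgebra

/-- the set `Z^p(ε) = {φ_{S,T} : S ∈ I^p(ε), T ∈ J^p(ε)}` -/
def ZpAt (SA : SchurAlgebra R Λ) (P : BlockCtx r g) (e : SigmaPIdx Λ P) :
    Set SA.carrier :=
  {x | ∃ S ∈ pIp P e, ∃ T ∈ pJp P e, x = SA.bas ⟨e.1.1, S.1, T.1, (S.2, T.2)⟩}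

/-- the ideal `(S^p)^{∨ε}`, spanned by the `Z^p(ε')` for `ε' > ε` -/
def SpVee (SA : SchurAlgebra R Λ) (P : BlockCtx r g) (e : SigmaPIdx Λ P) :
    Submodule R SA.carrier :=
  Submodule.span R (⋃ e' : {f : SigmaPIdx Λ P // sigmaGT P f e}, SA.ZpAt P e'.1)

end SchurAlgebra

end PLayer
/-! ## Based right modules and composition multiplicities -/

/-- a right `A`-module which is free as an `R`-module with a distinguished basis
indexed by `ι`; right `A`-modules are treated as left `Aᵐᵒᵖ`-modules -/
structure BasedRightModule (R : Type) [CommRing R] (A : Type) [Ring A]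
    [Algebra R A] (ι : Type) where
  M : Type
  [abGrp : AddCommGroup M]
  [modR : Module R M]
  [modA : Module Aᵐᵒᵖ M]
  [tower : IsScalarTower R Aᵐᵒᵖ M]
  bas : Module.Basis ι R M

namespace BasedRightModule

variable {R : Type} [CommRing R] {A : Type} [Ring A] [Algebra R A] {ι : Type}

instance (X : BasedRightModule R A ι) : AddCommGroup X.M := X.abGrp
instance (X : BasedRightModule R A ι) : Module R X.M := X.modR
instance (X : BasedRightModule R A ι) : Module Aᵐᵒᵖ X.M := X.modA
instance (X : BasedRightModule R A ι) : IsScalarTower R Aᵐᵒᵖ X.M := X.tower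

end BasedRightModule

/-- `N` is the radical of the bilinear form on the based module `X` whose Gram
matrix in the distinguished basis is `f` -/
def IsFormRadical {R : Type} [CommRing R] {A : Type} [Ring A] [Algebra R A]
    {ι : Type} [Fintype ι] (X : BasedRightModule R A ι) (f : ι → ι → R)
    (N : Submodule Aᵐᵒᵖ X.M) : Prop :=
  ∀ x : X.M, x ∈ N ↔ ∀ t : ι, (∑ s : ι, X.bas.repr x s * f s t) = 0

open Classical in
/-- the number of factors of the composition series `s` isomorphic to `L`: the
multiplicity `[M : L]` when `s` runs from `⊥` to `⊤` -/
noncomputable def factorMult {A : Type} [Ring A] {M : Type} [AddCommGroup M]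
    [Module A M] (s : CompositionSeries (Submodule A M)) (L : Type)
    [AddCommGroup L] [Module A L] : ℕ :=
  (Finset.univ.filter fun i : Fin s.length =>
    Nonempty ((↥(s i.succ) ⧸ Submodule.comap (s i.succ).subtype (s i.castSucc))
      ≃ₗ[A] L)).card

/-- a composition series of the full module: from `⊥` to `⊤` -/
def IsFullSeries {A : Type} [Ring A] {M : Type} [AddCommGroup M] [Module A M]
    (s : CompositionSeries (Submodule A M)) : Prop :=
  s.head = ⊥ ∧ s.last = ⊤
/-! ## The quotient algebra `\bar S^p` -/

section BarLayer

variable {R : Type} [CommRing R] {n r g : ℕ} {m : Fin r → ℕ}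
variable {Λ : Finset (MultiComp n r m)}

/-- Abstract datum of the quotient algebra `\bar S^p = S^p / \hat S^p`:
an `R`-algebra `B` together with the surjective projection `proj : S^p → B`,
whose kernel is the span of `Z^p \ {φ_{S,T} : S, T ∈ T₀^p(λ)}`, and the images
`\barφ_{S,T}` (`barphi`) of the basis elements, which form an `R`-basis of `B`. -/
structure BarSchurAlgebra {R : Type} [CommRing R] {n r : ℕ} {m : Fin r → ℕ}
    {Λ : Finset (MultiComp n r m)} {g : ℕ} (SA : SchurAlgebra R Λ)
    (P : BlockCtx r g) (Sp : Subalgebra R SA.carrier) where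
  B : Type
  [ringB : Ring B]
  [algB : Algebra R B]
  proj : ↥Sp →ₐ[R] B
  surj : Function.Surjective proj
  barphi : (lam : LamP Λ) → PTab P lam → PTab P lam → B
  bbas : Module.Basis (Σ lam : LamP Λ, PTab P lam × PTab P lam) R B
  bbas_eq : ∀ (lam : LamP Λ) (S T : PTab P lam), bbas ⟨lam, (S, T)⟩ = barphi lam S T
  proj_bas : ∀ (lam : LamP Λ) (mu nu : LamS Λ) (S : SSTab lam.1 mu.1)
    (T : SSTab lam.1 nu.1) (x : ↥Sp),
    (x : SA.carrier) = SA.bas ⟨lam, mu, nu, (S, T)⟩ →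
    proj x = if h : pCond P lam ⟨mu, S⟩ ∧ pCond P lam ⟨nu, T⟩
      then barphi lam ⟨⟨mu, S⟩, h.1⟩ ⟨⟨nu, T⟩, h.2⟩ else 0
  ker_char : ∀ x : ↥Sp, proj x = 0 ↔ (x : SA.carrier) ∈
    Submodule.span R (SA.ZpHatSet P)

namespace BarSchurAlgebra

variable {SA : SchurAlgebra R Λ} {P : BlockCtx r g} {Sp : Subalgebra R SA.carrier}

instance (BA : BarSchurAlgebra SA P Sp) : Ring BA.B := BA.ringB
instance (BA : BarSchurAlgebra SA P Sp) : Algebra R BA.B := BA.algB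

/-- the two-sided ideal `(\bar S^p)^{∨λ}`, spanned by the `\barφ_{S,T}` of shape
strictly dominating `λ` -/
def BarVee (BA : BarSchurAlgebra SA P Sp) (lam : LamP Λ) : Submodule R BA.B :=
  Submodule.span R {y : BA.B | ∃ (lam' : LamP Λ) (S T : PTab P lam'),
    MultiComp.SDominates lam'.1 lam.1 ∧ y = BA.barphi lam' S T}

end BarSchurAlgebra

/-! ## Characterizations of the various Weyl modules -/

namespace SchurAlgebra

/-- `W` is the Weyl module `W^λ` of `S(Λ)`: its basis `{φ_T}` is indexed by
`T₀(λ)` and the right action is the one inherited from multiplication in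
`S(Λ)` modulo `S(Λ)^{∨λ}`. -/
def IsWeylModule (SA : SchurAlgebra R Λ) (lam : LamP Λ)
    (W : BasedRightModule R SA.carrier (TabOf Λ lam)) : Prop :=
  ∀ (S T : TabOf Λ lam) (a : SA.carrier),
    SA.bas ⟨lam, S.1, T.1, (S.2, T.2)⟩ * a -
        ∑ T' : TabOf Λ lam, (W.bas.repr (MulOpposite.op a • W.bas T) T') •
          SA.bas ⟨lam, S.1, T'.1, (S.2, T'.2)⟩ ∈ SA.SVee lam

/-- `f` is the canonical bilinear form of the Weyl module `W^λ`, determined by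
`φ_{T^λ,S} φ_{T,T^λ} ≡ ⟨φ_S, φ_T⟩ φ_{T^λ,T^λ} mod S(Λ)^{∨λ}`; here `tc` is the
canonical tableau `T^λ`. -/
def IsWeylForm (SA : SchurAlgebra R Λ) (lam : LamP Λ) (tc : TabOf Λ lam)
    (f : TabOf Λ lam → TabOf Λ lam → R) : Prop :=
  ∀ S T : TabOf Λ lam,
    SA.bas ⟨lam, tc.1, S.1, (tc.2, S.2)⟩ * SA.bas ⟨lam, T.1, tc.1, (T.2, tc.2)⟩ -
      f S T • SA.bas ⟨lam, tc.1, tc.1, (tc.2, tc.2)⟩ ∈ SA.SVee lam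

/-- `Z` is the standard right `S^p`-module `Z_p^ε` attached to `ε ∈ Σ^p`: its
basis `{φ_T^ε}` is indexed by `J^p(ε)` and the right `S^p`-action is inherited
from multiplication in `S^p` modulo `(S^p)^{∨ε}`. -/
def IsZpModule (SA : SchurAlgebra R Λ) (P : BlockCtx r g)
    (Sp : Subalgebra R SA.carrier) (e : SigmaPIdx Λ P)
    (Z : BasedRightModule R ↥Sp {x : TabOf Λ e.1.1 // x ∈ pJp P e}) : Prop :=
  ∀ (S : {x : TabOf Λ e.1.1 // x ∈ pIp P e})
    (T : {x : TabOf Λ e.1.1 // x ∈ pJp P e}) (a : ↥Sp),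
    SA.bas ⟨e.1.1, S.1.1, T.1.1, (S.1.2, T.1.2)⟩ * (a : SA.carrier) -
        ∑ T' : {x : TabOf Λ e.1.1 // x ∈ pJp P e},
          (Z.bas.repr (MulOpposite.op a • Z.bas T) T') •
            SA.bas ⟨e.1.1, S.1.1, T'.1.1, (S.1.2, T'.1.2)⟩ ∈ SA.SpVee P e

/-- `f` is the canonical bilinear pairing `β_ε` between `◇Z_p^ε` and `Z_p^ε`,
determined by `φ_{U,T} φ_{S,V} ≡ β_ε(φ_S^ε, φ_T^ε) φ_{U,V} mod (S^p)^{∨ε}`. -/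
def IsBetaForm (SA : SchurAlgebra R Λ) (P : BlockCtx r g) (e : SigmaPIdx Λ P)
    (f : {x : TabOf Λ e.1.1 // x ∈ pIp P e} →
      {x : TabOf Λ e.1.1 // x ∈ pJp P e} → R) : Prop :=
  ∀ (U : {x : TabOf Λ e.1.1 // x ∈ pIp P e})
    (T : {x : TabOf Λ e.1.1 // x ∈ pJp P e})
    (S : {x : TabOf Λ e.1.1 // x ∈ pIp P e})
    (V : {x : TabOf Λ e.1.1 // x ∈ pJp P e}),
    SA.bas ⟨e.1.1, U.1.1, T.1.1, (U.1.2, T.1.2)⟩ *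
        SA.bas ⟨e.1.1, S.1.1, V.1.1, (S.1.2, V.1.2)⟩ -
      f S T • SA.bas ⟨e.1.1, U.1.1, V.1.1, (U.1.2, V.1.2)⟩ ∈ SA.SpVee P e

/-- `N` is the radical `rad Z_p^ε` of the pairing `β_ε` (with Gram matrix `f`). -/
def IsBetaRadical (SA : SchurAlgebra R Λ) (P : BlockCtx r g)
    (Sp : Subalgebra R SA.carrier) (e : SigmaPIdx Λ P)
    (Z : BasedRightModule R ↥Sp {x : TabOf Λ e.1.1 // x ∈ pJp P e})
    (f : {x : TabOf Λ e.1.1 // x ∈ pIp P e} →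
      {x : TabOf Λ e.1.1 // x ∈ pJp P e} → R)
    (N : Submodule (↥Sp)ᵐᵒᵖ Z.M) : Prop :=
  ∀ y : Z.M, y ∈ N ↔ ∀ S : {x : TabOf Λ e.1.1 // x ∈ pIp P e},
    (∑ T : {x : TabOf Λ e.1.1 // x ∈ pJp P e}, Z.bas.repr y T * f S T) = 0

end SchurAlgebra

namespace BarSchurAlgebra

variable {SA : SchurAlgebra R Λ} {P : BlockCtx r g} {Sp : Subalgebra R SA.carrier}

/-- `Z` is the Weyl (cell) module `\bar Z_p^λ` of the cellular algebra `\bar S^p`: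
its basis `{\barφ_T}` is indexed by `T₀^p(λ)` and the right action is inherited
from multiplication in `\bar S^p` modulo `(\bar S^p)^{∨λ}`. -/
def IsBarWeyl (BA : BarSchurAlgebra SA P Sp) (lam : LamP Λ)
    (Z : BasedRightModule R BA.B (PTab P lam)) : Prop :=
  ∀ (S T : PTab P lam) (b : BA.B),
    BA.barphi lam S T * b - ∑ T' : PTab P lam,
        (Z.bas.repr (MulOpposite.op b • Z.bas T) T') • BA.barphi lam S T' ∈
      BA.BarVee lam

/-- `f` is the canonical symmetric bilinear form `⟨·,·⟩_p` on `\bar Z_p^λ`,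
determined by `\barφ_{T^λ,S} \barφ_{T,T^λ} ≡ ⟨\barφ_S, \barφ_T⟩_p \barφ_{T^λ,T^λ}
mod (\bar S^p)^{∨λ}`; `tc` is the canonical tableau `T^λ`. -/
def IsBarForm (BA : BarSchurAlgebra SA P Sp) (lam : LamP Λ) (tc : PTab P lam)
    (f : PTab P lam → PTab P lam → R) : Prop :=
  ∀ S T : PTab P lam,
    BA.barphi lam tc S * BA.barphi lam T tc - f S T • BA.barphi lam tc tc ∈
      BA.BarVee lam

end BarSchurAlgebra

end BarLayer
/-! ## The Ariki–Koike algebra -/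

/-- the defining relations of the Ariki–Koike algebra `H_{n,r}` on the generators
`T_0, T_1, …, T_{n-1}` (generator `i : Fin n` is `T_i`) -/
inductive ArikiKoikeRel (R : Type) [CommRing R] (n r : ℕ) (q : Rˣ) (Q : Fin r → R) :
    FreeAlgebra R (Fin n) → FreeAlgebra R (Fin n) → Prop
  | cyclotomic (h : 0 < n) :
      ArikiKoikeRel R n r q Q
        (((List.finRange r).map fun j =>
          FreeAlgebra.ι R (⟨0, h⟩ : Fin n) - algebraMap R _ (Q j)).prod) 0
  | quadratic (i : Fin n) (hi : i.1 ≠ 0) :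
      ArikiKoikeRel R n r q Q
        ((FreeAlgebra.ι R i - algebraMap R _ (q : R)) *
          (FreeAlgebra.ι R i + algebraMap R _ ((q⁻¹ : Rˣ) : R))) 0
  | braid0 (h : 1 < n) :
      ArikiKoikeRel R n r q Q
        (FreeAlgebra.ι R (⟨0, Nat.lt_of_lt_of_le Nat.zero_lt_one h.le⟩ : Fin n) *
          FreeAlgebra.ι R (⟨1, h⟩ : Fin n) *
          FreeAlgebra.ι R (⟨0, Nat.lt_of_lt_of_le Nat.zero_lt_one h.le⟩ : Fin n) *
          FreeAlgebra.ι R (⟨1, h⟩ : Fin n))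
        (FreeAlgebra.ι R (⟨1, h⟩ : Fin n) *
          FreeAlgebra.ι R (⟨0, Nat.lt_of_lt_of_le Nat.zero_lt_one h.le⟩ : Fin n) *
          FreeAlgebra.ι R (⟨1, h⟩ : Fin n) *
          FreeAlgebra.ι R (⟨0, Nat.lt_of_lt_of_le Nat.zero_lt_one h.le⟩ : Fin n))
  | braid (i j : Fin n) (hi : i.1 ≠ 0) (hij : j.1 = i.1 + 1) :
      ArikiKoikeRel R n r q Q
        (FreeAlgebra.ι R i * FreeAlgebra.ι R j * FreeAlgebra.ι R i)
        (FreeAlgebra.ι R j * FreeAlgebra.ι R i * FreeAlgebra.ι R j)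
  | comm (i j : Fin n) (hij : i.1 + 1 < j.1) :
      ArikiKoikeRel R n r q Q
        (FreeAlgebra.ι R i * FreeAlgebra.ι R j)
        (FreeAlgebra.ι R j * FreeAlgebra.ι R i)

/-- the Ariki–Koike algebra `H_{n,r}` over `R` with parameters
`q, Q_1, …, Q_r` (with `q` invertible) -/
abbrev ArikiKoike (R : Type) [CommRing R] (n r : ℕ) (q : Rˣ) (Q : Fin r → R) :=
  RingQuot (ArikiKoikeRel R n r q Q)

/-! ## Corners `e·B·e` at an idempotent -/

/-- an idempotent element of a ring -/
structure IdemElem (B : Type) [Ring B] where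
  e : B
  idem : e * e = e

/-- the corner `{x : B | e x e = x}` of `B` at the idempotent `e`;
for `e = \barφ_Ω` this is the modified Ariki–Koike algebra
`\bar H^p = \barφ_Ω ⬝ \bar S^p ⬝ \barφ_Ω` of type `p` -/
def Corner {B : Type} [Ring B] (E : IdemElem B) := {x : B // E.e * x * E.e = x}

namespace Corner

variable {B : Type} [Ring B] {E : IdemElem B}

instance : Add (Corner E) :=
  ⟨fun x y => ⟨x.1 + y.1, by rw [mul_add, add_mul, x.2, y.2]⟩⟩

instance : Mul (Corner E) :=
  ⟨fun x y => ⟨x.1 * y.1, by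
    have hx : E.e * x.1 = x.1 := by
      nth_rewrite 1 [← x.2]
      rw [← mul_assoc, ← mul_assoc, E.idem, x.2]
    have hy : y.1 * E.e = y.1 := by
      nth_rewrite 1 [← y.2]
      rw [mul_assoc, E.idem, y.2]
    rw [← mul_assoc, hx, mul_assoc, hy]⟩⟩

instance : Zero (Corner E) := ⟨⟨0, by simp⟩⟩

instance : Neg (Corner E) := ⟨fun x => ⟨-x.1, by rw [mul_neg, neg_mul, x.2]⟩⟩

/-- the identity element `e` of the corner -/
def one (E : IdemElem B) : Corner E :=
  ⟨E.e, by rw [E.idem, E.idem]⟩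

instance {R : Type} [CommRing R] [Algebra R B] : SMul R (Corner E) :=
  ⟨fun c x => ⟨c • x.1, by rw [mul_smul_comm, smul_mul_assoc, x.2]⟩⟩

@[simp] theorem add_val (x y : Corner E) : (x + y).1 = x.1 + y.1 := rfl
@[simp] theorem mul_val (x y : Corner E) : (x * y).1 = x.1 * y.1 := rfl
@[simp] theorem smul_val {R : Type} [CommRing R] [Algebra R B] (c : R)
    (x : Corner E) : (c • x).1 = c • x.1 := rfl

end Corner

/-! ## The set `Ω` and the blocks of compositions of `n` -/

section OmegaLayer

variable {n r g : ℕ} {m : Fin r → ℕ}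

/-- `ω ∈ Ω`: all the entries of `ω` are `0` or `1`, for each letter
`1 ≤ i ≤ n` the `i`-th rows of the components of `ω` have total size `1`,
and all nonzero rows occur in components which are last in their `p`-block
(this uses `m_k ≥ n` for all `k`). -/
def IsOmega (P : BlockCtx r g) (hm : ∀ k, n ≤ m k) (om : MultiComp n r m) : Prop :=
  (∀ (k : Fin r) (i : Fin (m k)), om.part k i ≤ 1) ∧
  (∀ i : Fin n,
    (∑ k : Fin r, om.part k ⟨i.1, Nat.lt_of_lt_of_le i.2 (hm k)⟩) = 1) ∧
  (∀ (k : Fin r) (i : Fin (m k)), om.part k i = 1 →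
    ∀ k' : Fin r, P.π k' = P.π k → k' ≤ k)

instance (P : BlockCtx r g) (hm : ∀ k, n ≤ m k) (om : MultiComp n r m) :
    Decidable (IsOmega P hm om) := by
  unfold IsOmega; infer_instance

/-- the set `D_{n,g}` of tuples `(n₁, …, n_g)` of non-negative integers summing
to `n` -/
def DComp (n g : ℕ) := {f : Fin g → ℕ // ∑ b, f b = n}

end OmegaLayer


/-!
Write `φ_i` for the cellular basis element with index `i = (λ, μ, ν, S, T)`. Since
`a_p(μ) ≤ a_p(λ)` whenever `T₀(λ,μ) ≠ ∅`, and `a_p` determines `α_p`, the condition `φ_i ∈ Z^p`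
says `a_p(μ) = a_p(λ) → a_p(ν) = a_p(λ)`; such a `φ_i` lies in exactly one `Z^p(ε)`, namely
`ε = (λ, [a_p(μ) ≠ a_p(λ)])`.

Every `φ_j` occurring in `φ_i φ_{i'}` has the row type of `i`, the column type of `i'`, and a
shape dominating both shapes (idempotents `φ_μ` and cellularity, on both sides through `*`).
As `a_p` is monotone for dominance, the chain `a_p(μ) ≤ a_p(λ) ≤ a_p(λ_j)` carries the
condition from `i` and `i'` over to `j`, so `S^p` is a subalgebra. The same bookkeeping shows
that the cellular expansion of `φ φ_{S,T}` (resp. `φ_{S,T} φ`), with the terms outside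
`I^p(ε)` (resp. `J^p(ε)`) discarded, differs from the product by elements of `Z^p(ε')`, `ε' > ε`.
-/

theorem Module.Basis.mem_of_repr_ne_zero {ι R M : Type*} [Semiring R] [AddCommMonoid M]
    [Module R M] (b : Module.Basis ι R M) {s : Set ι} {x : M}
    (hx : x ∈ Submodule.span R (b '' s)) {i : ι} (hi : b.repr x i ≠ 0) : i ∈ s :=
  b.mem_span_image.1 hx (Finsupp.mem_support_iff.2 hi)

theorem Module.Basis.repr_sum_smul_of_injective {ι κ R M : Type*} [CommRing R] [AddCommGroup M]
    [Module R M] [Fintype κ] (b : Module.Basis ι R M) {f : κ → ι} (hf : Function.Injective f)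
    (c : κ → R) (x : κ) : b.repr (∑ x', c x' • b (f x')) (f x) = c x := by
  classical
  simp [Finsupp.single_apply, hf.eq_iff]

theorem Module.Basis.repr_sub_sum_ite_repr_smul {ι κ R M : Type*} [CommRing R] [AddCommGroup M]
    [Module R M] [Fintype κ] (b : Module.Basis ι R M) {f : κ → ι} (hf : Function.Injective f)
    (y : M) (K : Set κ) [DecidablePred (· ∈ K)] (j : ι) :
    b.repr (y - ∑ x, (if x ∈ K then b.repr y (f x) else 0) • b (f x)) j =
      (f '' K)ᶜ.indicator (b.repr y) j := by
  classical
  simp only [map_sub, map_sum, map_smul, Module.Basis.repr_self, Finsupp.sub_apply,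
    Finsupp.finsetSum_apply, Finsupp.smul_apply, Finsupp.single_apply, smul_eq_mul, mul_ite,
    mul_one, mul_zero, Set.indicator_apply, Set.mem_compl_iff]
  by_cases hj : j ∈ f '' K
  · obtain ⟨x, hx, rfl⟩ := hj
    rw [Finset.sum_eq_single x (fun x' _ hx' => by simp [hf.eq_iff, hx']) (by simp),
      if_pos rfl, if_pos hx, sub_self, if_neg (not_not.2 ⟨x, hx, rfl⟩)]
  · rw [Finset.sum_eq_zero fun x _ => ?_, sub_zero, if_pos hj]
    split_ifs with hfx hx
    · exact absurd ⟨x, hx, hfx⟩ hj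
    · rfl
    · rfl

theorem exists_coeff_sub_sum_mem_of_mem_span {R A M κ τ : Type*} [CommRing R] [AddCommGroup A]
    [Module R A] [AddCommGroup M] [Module R M] [Fintype κ] (L : τ → A →ₗ[R] M)
    (v : τ → κ → M) (N : Submodule R M) (I : Set κ) (J : Set τ) {s : Set A}
    (hs : ∀ a ∈ s, ∃ c : κ → R, (∀ x ∉ I, c x = 0) ∧ ∀ t ∈ J, L t a - ∑ x, c x • v t x ∈ N)
    {a : A} (ha : a ∈ Submodule.span R s) :
    ∃ c : κ → R, (∀ x ∉ I, c x = 0) ∧ ∀ t ∈ J, L t a - ∑ x, c x • v t x ∈ N := by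
  induction ha using Submodule.span_induction with
  | mem a ha => exact hs a ha
  | zero => exact ⟨0, fun _ _ => rfl, fun t _ => by simp⟩
  | add a b _ _ iha ihb =>
    obtain ⟨c, hcI, hc⟩ := iha
    obtain ⟨d, hdI, hd⟩ := ihb
    refine ⟨c + d, fun x hx => by simp [hcI x hx, hdI x hx], fun t ht => ?_⟩
    convert add_mem (hc t ht) (hd t ht) using 1
    simp only [map_add, Pi.add_apply, add_smul, Finset.sum_add_distrib]
    abel
  | smul r a _ iha =>
    obtain ⟨c, hcI, hc⟩ := iha
    refine ⟨r • c, fun x hx => by simp [hcI x hx], fun t ht => ?_⟩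
    convert N.smul_mem r (hc t ht) using 1
    simp only [map_smul, Pi.smul_apply, smul_sub, Finset.smul_sum, smul_assoc]

theorem MultiComp.Dominates.sum_compSize_le {n r : ℕ} {m : Fin r → ℕ} {lam' lam : MultiComp n r m}
    (h : lam'.Dominates lam) (k : Fin r) (hk : 0 < m k) :
    ∑ c ∈ Finset.Iic k, lam.compSize c ≤ ∑ c ∈ Finset.Iic k, lam'.compSize c := by
  have hrow := h k ⟨m k - 1, by omega⟩
  have hlast : Finset.univ.filter (· ≤ (⟨m k - 1, by omega⟩ : Fin (m k))) = Finset.univ :=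
    Finset.filter_true_of_mem fun j _ => Fin.le_def.2 (Nat.le_sub_one_of_lt j.2)
  rw [hlast] at hrow
  simp only [← Finset.Iio_insert, Finset.sum_insert Finset.notMem_Iio_self]
  simpa [Finset.filter_gt_eq_Iio, MultiComp.compSize, add_comm] using hrow

namespace BlockCtx

variable {n r g : ℕ} {m : Fin r → ℕ} (P : BlockCtx r g)

theorem aP_eq_sum_alphaP (mu : MultiComp n r m) (b : Fin g) :
    P.aP mu b = ∑ b' ∈ Finset.Iio b, P.alphaP mu b' := by
  simp only [alphaP, Finset.sum_fiberwise_eq_sum_filter]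
  simp [aP]

theorem aP_eq_iff_alphaP_eq {mu nu : MultiComp n r m} :
    P.aP mu = P.aP nu ↔ P.alphaP mu = P.alphaP nu := by
  refine ⟨fun h => funext fun b => ?_, fun h => funext fun b => by simp only [aP_eq_sum_alphaP, h]⟩
  have upTo (rho : MultiComp n r m) :
      ∑ b' ∈ Finset.Iic b, P.alphaP rho b' = P.aP rho b + P.alphaP rho b := by
    rw [← Finset.Iio_insert, Finset.sum_insert Finset.notMem_Iio_self, aP_eq_sum_alphaP, add_comm]
  suffices ∑ b' ∈ Finset.Iic b, P.alphaP mu b' = ∑ b' ∈ Finset.Iic b, P.alphaP nu b' by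
    have := congrFun h b
    have := upTo mu
    have := upTo nu
    omega
  by_cases hb : b.1 + 1 < g
  · have hIic : Finset.Iic b = Finset.Iio ⟨b.1 + 1, hb⟩ :=
      Finset.ext fun b' => by
        simp only [Finset.mem_Iic, Finset.mem_Iio, Fin.le_def, Fin.lt_def]; omega
    rw [hIic, ← aP_eq_sum_alphaP, ← aP_eq_sum_alphaP, h]
  · have hIic : Finset.Iic b = Finset.univ :=
      Finset.ext fun b' => by
        simp only [Finset.mem_Iic, Finset.mem_univ, iff_true, Fin.le_def]; omega
    simp only [hIic, alphaP, Finset.sum_fiberwise]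
    exact mu.sum_eq.trans nu.sum_eq.symm

theorem sum_compSize_eq_card_cells (lam : MultiComp n r m) (p : Fin r → Prop) [DecidablePred p] :
    ∑ k ∈ Finset.univ.filter p, lam.compSize k = Fintype.card {c : lam.Cell // p c.1} := by
  rw [Fintype.card_subtype, Finset.card_filter, Fintype.sum_sigma, Finset.sum_filter]
  refine Finset.sum_congr rfl fun k _ => ?_
  split_ifs <;> simp [MultiComp.compSize, *]

theorem sum_compSize_eq_card_entries {lam mu : MultiComp n r m} (T : SSTab lam mu)
    (p : Fin r → Prop) [DecidablePred p] :
    ∑ k ∈ Finset.univ.filter p, mu.compSize k =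
      Fintype.card {c : lam.Cell // p (T.entry c).1} := by
  have fiber (e : MCEntry r m) :
      ∑ c ∈ Finset.univ.filter (T.entry · = e), (if p (T.entry c).1 then 1 else 0) =
        if p e.1 then mu.part e.1 e.2 else 0 := by
    rw [Finset.sum_congr rfl fun c hc => by rw [(Finset.mem_filter.1 hc).2], Finset.sum_const,
      T.typeCount e, Fintype.card_subtype]
    split_ifs <;> simp
  rw [Fintype.card_subtype, Finset.card_filter, ← Finset.sum_fiberwise Finset.univ T.entry]
  simp only [fiber, Fintype.sum_sigma, Finset.sum_filter, MultiComp.compSize]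
  refine Finset.sum_congr rfl fun k _ => ?_
  split_ifs <;> simp

theorem aP_le_of_sstab {lam mu : MultiComp n r m} (T : SSTab lam mu) : P.aP mu ≤ P.aP lam :=
  fun b => by
    rw [aP, aP, sum_compSize_eq_card_entries T, sum_compSize_eq_card_cells]
    exact Fintype.card_subtype_mono _ _ fun c hc => (P.mono (T.compLE c)).trans_lt hc

theorem aP_le_of_dominates (hm : ∀ k, 0 < m k) {lam' lam : MultiComp n r m}
    (h : lam'.Dominates lam) : P.aP lam ≤ P.aP lam' := by
  intro b
  rcases (Finset.univ.filter fun k => P.π k < b).eq_empty_or_nonempty with hempty | hne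
  · simp [aP, hempty]
  · set k := (Finset.univ.filter fun k => P.π k < b).max' hne
    have hk : P.π k < b := (Finset.mem_filter.1 (Finset.max'_mem _ hne)).2
    have hIic : (Finset.univ.filter fun k => P.π k < b) = Finset.Iic k :=
      Finset.ext fun c => by
        simp only [Finset.mem_filter, Finset.mem_univ, true_and, Finset.mem_Iic]
        exact ⟨fun hc => Finset.le_max' _ c (by simpa using hc),
          fun hc => (P.mono hc).trans_lt hk⟩
    simpa only [aP, hIic] using h.sum_compSize_le k (hm k)

end BlockCtx

namespace DJMIndex

variable {n r : ℕ} {m : Fin r → ℕ} {Λ : Finset (MultiComp n r m)}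

abbrev ofTab (lam : LamP Λ) (x y : TabOf Λ lam) : DJMIndex Λ := ⟨lam, x.1, y.1, (x.2, y.2)⟩

abbrev rowTab (i : DJMIndex Λ) : TabOf Λ i.1 := ⟨i.2.1, i.2.2.2.1⟩

abbrev colTab (i : DJMIndex Λ) : TabOf Λ i.1 := ⟨i.2.2.1, i.2.2.2.2⟩

theorem ofTab_injective_left (lam : LamP Λ) (y : TabOf Λ lam) :
    Function.Injective fun x => ofTab lam x y := by
  rintro ⟨mu, S⟩ ⟨mu', S'⟩ h
  simp only [ofTab, Sigma.mk.injEq, heq_eq_eq, true_and] at h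
  obtain ⟨rfl, h⟩ := h
  simp_all

theorem ofTab_injective_right (lam : LamP Λ) (x : TabOf Λ lam) :
    Function.Injective fun y => ofTab lam x y := by
  rintro ⟨nu, T⟩ ⟨nu', T'⟩ h
  simp only [ofTab, Sigma.mk.injEq, heq_eq_eq, true_and] at h
  obtain ⟨rfl, h⟩ := h
  simp_all

end DJMIndex

namespace SchurAlgebra

open DJMIndex

variable {R : Type} [CommRing R] {n r : ℕ} {m : Fin r → ℕ} {Λ : Finset (MultiComp n r m)}
variable (SA : SchurAlgebra R Λ)

theorem sVee_eq_span (lam : LamP Λ) :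
    SA.SVee lam = Submodule.span R (SA.bas '' {j | j.1.1.SDominates lam.1}) := by
  show Submodule.span R _ = _
  congr 1
  ext y
  constructor
  · rintro ⟨lam', mu', nu', S', T', hdom, rfl⟩
    exact ⟨_, hdom, rfl⟩
  · rintro ⟨⟨lam', mu', nu', S', T'⟩, hdom, rfl⟩
    exact ⟨lam', mu', nu', S', T', hdom, rfl⟩

theorem repr_eq_zero_of_mem_sVee {lam : LamP Λ} {y : SA.carrier} (hy : y ∈ SA.SVee lam)
    {j : DJMIndex Λ} (hj : ¬ j.1.1.SDominates lam.1) : SA.bas.repr y j = 0 := by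
  rw [sVee_eq_span] at hy
  by_contra h
  exact hj (SA.bas.mem_of_repr_ne_zero hy h)

theorem repr_eq_of_sub_sum_mem_sVee {lam : LamP Λ} {y : SA.carrier} {f : TabOf Λ lam → DJMIndex Λ}
    (hf : Function.Injective f) (hshape : ∀ x, (f x).1 = lam) {c : TabOf Λ lam → R}
    (hy : y - ∑ x, c x • SA.bas (f x) ∈ SA.SVee lam) (x : TabOf Λ lam) :
    c x = SA.bas.repr y (f x) := by
  have h := SA.repr_eq_zero_of_mem_sVee hy (j := f x) fun hdom => hdom.2 (by rw [hshape])
  rwa [map_sub, Finsupp.sub_apply, SA.bas.repr_sum_smul_of_injective hf, sub_eq_zero, eq_comm] at h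

theorem astar_astar (x : SA.carrier) : SA.astar (SA.astar x) = x := by
  have h : SA.astar ∘ₗ SA.astar = LinearMap.id :=
    SA.bas.ext fun ⟨lam, mu, nu, S, T⟩ => by simp [SA.astar_bas]
  exact LinearMap.congr_fun h x

theorem astar_bas_ofTab (lam : LamP Λ) (x y : TabOf Λ lam) :
    SA.astar (SA.bas (ofTab lam x y)) = SA.bas (ofTab lam y x) :=
  SA.astar_bas lam x.1 y.1 x.2 y.2

theorem astar_mem_sVee {lam : LamP Λ} {y : SA.carrier} (hy : y ∈ SA.SVee lam) :
    SA.astar y ∈ SA.SVee lam := by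
  rw [sVee_eq_span] at hy ⊢
  refine (Submodule.span_le (p := (Submodule.span R _).comap SA.astar)).2 ?_ hy
  rintro _ ⟨⟨lam', mu', nu', S', T'⟩, hdom, rfl⟩
  exact Submodule.subset_span ⟨⟨lam', nu', mu', (T', S')⟩, hdom, (SA.astar_bas lam' mu' nu' S' T').symm⟩

theorem exists_mul_bas_sub_sum_mem_sVee (a : SA.carrier) (lam : LamP Λ) (x : TabOf Λ lam) :
    ∃ c : TabOf Λ lam → R, ∀ y : TabOf Λ lam,
      a * SA.bas (ofTab lam x y) - ∑ x', c x' • SA.bas (ofTab lam x' y) ∈ SA.SVee lam :=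
  (SA.cellular a lam x.1 x.2).imp fun _ hc y => hc y.1 y.2

theorem exists_bas_mul_sub_sum_mem_sVee (a : SA.carrier) (lam : LamP Λ) (y : TabOf Λ lam) :
    ∃ c : TabOf Λ lam → R, ∀ x : TabOf Λ lam,
      SA.bas (ofTab lam x y) * a - ∑ y', c y' • SA.bas (ofTab lam x y') ∈ SA.SVee lam := by
  obtain ⟨c, hc⟩ := SA.exists_mul_bas_sub_sum_mem_sVee (SA.astar a) lam y
  refine ⟨c, fun x => ?_⟩
  simpa [SA.astar_mul, astar_bas_ofTab, astar_astar] using SA.astar_mem_sVee (hc x)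

theorem phiId_mul_mem_span (ρ : LamS Λ) (y : SA.carrier) :
    SA.phiId ρ * y ∈ Submodule.span R (SA.bas '' {j | j.2.1 = ρ}) := by
  rw [← SA.bas.sum_repr y, Finset.mul_sum]
  refine Submodule.sum_mem _ fun ⟨lam, mu, nu, S, T⟩ _ => ?_
  rw [mul_smul_comm, SA.phiId_mul_bas]
  split_ifs with h
  · exact Submodule.smul_mem _ _ (Submodule.subset_span ⟨_, h.symm, rfl⟩)
  · rw [smul_zero]
    exact zero_mem _

theorem mul_phiId_mem_span (y : SA.carrier) (ρ : LamS Λ) :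
    y * SA.phiId ρ ∈ Submodule.span R (SA.bas '' {j | j.2.2.1 = ρ}) := by
  rw [← SA.bas.sum_repr y, Finset.sum_mul]
  refine Submodule.sum_mem _ fun ⟨lam, mu, nu, S, T⟩ _ => ?_
  rw [smul_mul_assoc, SA.bas_mul_phiId]
  split_ifs with h
  · exact Submodule.smul_mem _ _ (Submodule.subset_span ⟨_, h.symm, rfl⟩)
  · rw [smul_zero]
    exact zero_mem _

variable {SA}

theorem rowType_eq_of_repr_bas_mul_ne_zero {i j : DJMIndex Λ} {a : SA.carrier}
    (h : SA.bas.repr (SA.bas i * a) j ≠ 0) : j.2.1 = i.2.1 := by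
  have hi : SA.phiId i.2.1 * SA.bas i = SA.bas i := by
    obtain ⟨lam, mu, nu, S, T⟩ := i
    rw [SA.phiId_mul_bas, if_pos rfl]
  rw [← hi, mul_assoc] at h
  exact SA.bas.mem_of_repr_ne_zero (SA.phiId_mul_mem_span _ _) h

theorem colType_eq_of_repr_mul_bas_ne_zero {i j : DJMIndex Λ} {a : SA.carrier}
    (h : SA.bas.repr (a * SA.bas i) j ≠ 0) : j.2.2.1 = i.2.2.1 := by
  have hi : SA.bas i * SA.phiId i.2.2.1 = SA.bas i := by
    obtain ⟨lam, mu, nu, S, T⟩ := i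
    rw [SA.bas_mul_phiId, if_pos rfl]
  rw [← hi, ← mul_assoc] at h
  exact SA.bas.mem_of_repr_ne_zero (SA.mul_phiId_mem_span _ _) h

theorem bas_mul_bas_eq_zero {i i' : DJMIndex Λ} (h : i.2.2.1 ≠ i'.2.1) :
    SA.bas i * SA.bas i' = 0 := by
  obtain ⟨lam, mu, nu, S, T⟩ := i
  obtain ⟨lam', mu', nu', S', T'⟩ := i'
  calc SA.bas ⟨lam, mu, nu, (S, T)⟩ * SA.bas ⟨lam', mu', nu', (S', T')⟩
      = SA.bas ⟨lam, mu, nu, (S, T)⟩ * SA.phiId nu * SA.bas ⟨lam', mu', nu', (S', T')⟩ := by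
        rw [SA.bas_mul_phiId, if_pos rfl]
    _ = 0 := by rw [mul_assoc, SA.phiId_mul_bas, if_neg (show nu ≠ mu' from h), mul_zero]

theorem eq_ofTab_or_sDominates_of_repr_mul_bas_ne_zero {i j : DJMIndex Λ} {a : SA.carrier}
    (h : SA.bas.repr (a * SA.bas i) j ≠ 0) :
    (∃ x, j = ofTab i.1 x i.colTab) ∨ j.1.1.SDominates i.1.1 := by
  obtain ⟨c, hc⟩ := SA.exists_mul_bas_sub_sum_mem_sVee a i.1 i.rowTab
  suffices hmem : a * SA.bas i ∈ Submodule.span R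
      (SA.bas '' ({j | ∃ x, j = ofTab i.1 x i.colTab} ∪ {j | j.1.1.SDominates i.1.1})) from
    SA.bas.mem_of_repr_ne_zero hmem h
  rw [← sub_add_cancel (a * SA.bas i) (∑ x, c x • SA.bas (ofTab i.1 x i.colTab))]
  refine add_mem ?_ (Submodule.sum_mem _ fun x _ =>
    Submodule.smul_mem _ _ (Submodule.subset_span ⟨_, Or.inl ⟨x, rfl⟩, rfl⟩))
  have hvee := hc i.colTab
  rw [sVee_eq_span] at hvee
  exact Submodule.span_mono (Set.image_mono Set.subset_union_right) hvee

theorem eq_ofTab_or_sDominates_of_repr_bas_mul_ne_zero {i j : DJMIndex Λ} {a : SA.carrier}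
    (h : SA.bas.repr (SA.bas i * a) j ≠ 0) :
    (∃ y, j = ofTab i.1 i.rowTab y) ∨ j.1.1.SDominates i.1.1 := by
  obtain ⟨c, hc⟩ := SA.exists_bas_mul_sub_sum_mem_sVee a i.1 i.colTab
  suffices hmem : SA.bas i * a ∈ Submodule.span R
      (SA.bas '' ({j | ∃ y, j = ofTab i.1 i.rowTab y} ∪ {j | j.1.1.SDominates i.1.1})) from
    SA.bas.mem_of_repr_ne_zero hmem h
  rw [← sub_add_cancel (SA.bas i * a) (∑ y, c y • SA.bas (ofTab i.1 i.rowTab y))]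
  refine add_mem ?_ (Submodule.sum_mem _ fun y _ =>
    Submodule.smul_mem _ _ (Submodule.subset_span ⟨_, Or.inl ⟨y, rfl⟩, rfl⟩))
  have hvee := hc i.rowTab
  rw [sVee_eq_span] at hvee
  exact Submodule.span_mono (Set.image_mono Set.subset_union_right) hvee

theorem dominates_of_repr_mul_bas_ne_zero {i j : DJMIndex Λ} {a : SA.carrier}
    (h : SA.bas.repr (a * SA.bas i) j ≠ 0) : j.1.1.Dominates i.1.1 := by
  rcases eq_ofTab_or_sDominates_of_repr_mul_bas_ne_zero h with ⟨x, rfl⟩ | hdom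
  · exact fun _ _ => le_rfl
  · exact hdom.1

theorem dominates_of_repr_bas_mul_ne_zero {i j : DJMIndex Λ} {a : SA.carrier}
    (h : SA.bas.repr (SA.bas i * a) j ≠ 0) : j.1.1.Dominates i.1.1 := by
  rcases eq_ofTab_or_sDominates_of_repr_bas_mul_ne_zero h with ⟨y, rfl⟩ | hdom
  · exact fun _ _ => le_rfl
  · exact hdom.1

end SchurAlgebra

section ZpIndex

open DJMIndex

variable {n r g : ℕ} {m : Fin r → ℕ} {Λ : Finset (MultiComp n r m)} (P : BlockCtx r g)

def IsZpIndex (i : DJMIndex Λ) : Prop :=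
  P.aP i.2.1.1 = P.aP i.1.1 → P.aP i.2.2.1.1 = P.aP i.1.1

def sigmaPIdxOf (i : DJMIndex Λ) : SigmaPIdx Λ P :=
  ⟨(i.1, decide (P.aP i.2.1.1 ≠ P.aP i.1.1)),
    fun h => ⟨i.2.1, ⟨P.aP_le_of_sstab i.2.2.2.1, of_decide_eq_true h⟩, ⟨i.2.2.2.1⟩⟩⟩

variable {P}

theorem zpCond_iff_isZpIndex (i : DJMIndex Λ) :
    (P.alphaP i.2.1.1 ≠ P.alphaP i.2.2.1.1 → vecLT (P.aP i.2.1.1) (P.aP i.1.1)) ↔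
      IsZpIndex P i := by
  have hle : vecLE (P.aP i.2.1.1) (P.aP i.1.1) := P.aP_le_of_sstab i.2.2.2.1
  simp only [IsZpIndex, vecLT, ne_eq, ← P.aP_eq_iff_alphaP_eq, hle, true_and]
  constructor
  · intro h hrow
    by_contra hcol
    exact h (fun hrc => hcol (hrc ▸ hrow)) hrow
  · intro h hrc hrow
    exact hrc (hrow.trans (h hrow).symm)

theorem mem_pIp_iff {e : SigmaPIdx Λ P} {x : TabOf Λ e.1.1} :
    x ∈ pIp P e ↔ decide (P.aP x.1.1 ≠ P.aP e.1.1.1) = e.1.2 := by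
  have hle : vecLE (P.aP x.1.1) (P.aP e.1.1.1) := P.aP_le_of_sstab x.2
  rcases e with ⟨⟨lam, _ | _⟩, he⟩ <;> simp [pIp, pCond, vecLT, hle]

theorem isZpIndex_ofTab {e : SigmaPIdx Λ P} {x y : TabOf Λ e.1.1} (hx : x ∈ pIp P e)
    (hy : y ∈ pJp P e) : IsZpIndex P (ofTab e.1.1 x y) := by
  intro hrow
  rw [mem_pIp_iff] at hx
  simp only [hrow, ne_eq, not_true_eq_false, decide_false] at hx
  exact hy.resolve_left (by rw [← hx]; simp)

end ZpIndex

namespace SchurAlgebra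

open DJMIndex

variable {R : Type} [CommRing R] {n r g : ℕ} {m : Fin r → ℕ} {Λ : Finset (MultiComp n r m)}
variable (SA : SchurAlgebra R Λ) (P : BlockCtx r g)

theorem zpSet_eq_image : SA.ZpSet P = SA.bas '' {i | IsZpIndex P i} := by
  ext y
  constructor
  · rintro ⟨lam, mu, nu, S, T, hcond, rfl⟩
    exact ⟨_, (zpCond_iff_isZpIndex _).1 hcond, rfl⟩
  · rintro ⟨⟨lam, mu, nu, S, T⟩, hi, rfl⟩
    exact ⟨lam, mu, nu, S, T, (zpCond_iff_isZpIndex _).2 hi, rfl⟩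

theorem zpAt_eq_image (e : SigmaPIdx Λ P) :
    SA.ZpAt P e = SA.bas '' {i | IsZpIndex P i ∧ sigmaPIdxOf P i = e} := by
  ext y
  constructor
  · rintro ⟨x, hx, z, hz, rfl⟩
    exact ⟨_, ⟨isZpIndex_ofTab hx hz, Subtype.ext (Prod.ext rfl (mem_pIp_iff.1 hx))⟩, rfl⟩
  · rintro ⟨⟨lam, mu, nu, S, T⟩, ⟨hi, rfl⟩, rfl⟩
    refine ⟨⟨mu, S⟩, mem_pIp_iff.2 rfl, ⟨nu, T⟩, ?_, rfl⟩
    by_cases hrow : P.aP mu.1 = P.aP lam.1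
    · exact Or.inr (hi hrow)
    · exact Or.inl (decide_eq_true hrow)

theorem zpSet_eq_iUnion_zpAt : SA.ZpSet P = ⋃ e, SA.ZpAt P e := by
  simp only [zpSet_eq_image, zpAt_eq_image, ← Set.image_iUnion]
  congr 1
  ext i
  simp

theorem zpAt_inter_zpAt_eq_empty [Nontrivial R] {e f : SigmaPIdx Λ P} (hef : e ≠ f) :
    SA.ZpAt P e ∩ SA.ZpAt P f = ∅ := by
  rw [zpAt_eq_image, zpAt_eq_image, ← Set.image_inter SA.bas.injective, Set.image_eq_empty]
  ext i
  simp only [Set.mem_inter_iff, Set.mem_ofPred_eq, Set.mem_empty_iff_false, iff_false]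
  exact fun ⟨⟨_, he⟩, ⟨_, hf⟩⟩ => hef (he.symm.trans hf)

variable {SA P}

theorem mem_spVee_of_repr_ne_zero {e : SigmaPIdx Λ P} {y : SA.carrier}
    (h : ∀ j, SA.bas.repr y j ≠ 0 → IsZpIndex P j ∧ sigmaGT P (sigmaPIdxOf P j) e) :
    y ∈ SA.SpVee P e := by
  rw [← SA.bas.sum_repr y]
  refine Submodule.sum_mem _ fun j _ => ?_
  by_cases hj : SA.bas.repr y j = 0
  · rw [hj, zero_smul]
    exact zero_mem _
  obtain ⟨hzp, hgt⟩ := h j hj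
  refine Submodule.smul_mem _ _ (Submodule.subset_span (Set.mem_iUnion.2 ⟨⟨_, hgt⟩, ?_⟩))
  rw [zpAt_eq_image]
  exact ⟨j, ⟨hzp, rfl⟩, rfl⟩

theorem aP_eq_of_repr_bas_mul_bas_ne_zero (hm : ∀ k, 0 < m k) {i i' j : DJMIndex Λ}
    (hi : IsZpIndex P i) (h : SA.bas.repr (SA.bas i * SA.bas i') j ≠ 0)
    (hj : P.aP j.2.1.1 = P.aP j.1.1) :
    P.aP i'.2.1.1 = P.aP i'.1.1 ∧ P.aP i'.1.1 = P.aP j.1.1 := by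
  have hmid : i.2.2.1 = i'.2.1 := by
    by_contra hne
    rw [bas_mul_bas_eq_zero hne, map_zero] at h
    exact h rfl
  have hrow : P.aP i.2.1.1 = P.aP j.1.1 := by rw [← rowType_eq_of_repr_bas_mul_ne_zero h, hj]
  have hshape : P.aP i.1.1 = P.aP j.1.1 :=
    le_antisymm (P.aP_le_of_dominates hm (dominates_of_repr_bas_mul_ne_zero h))
      (hrow.symm.le.trans (P.aP_le_of_sstab i.2.2.2.1))
  have hrow' : P.aP i'.2.1.1 = P.aP j.1.1 := by rw [← hmid, hi (hrow.trans hshape.symm), hshape]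
  have hshape' : P.aP i'.1.1 = P.aP j.1.1 :=
    le_antisymm (P.aP_le_of_dominates hm (dominates_of_repr_mul_bas_ne_zero h))
      (hrow'.symm.le.trans (P.aP_le_of_sstab i'.2.2.2.1))
  exact ⟨hrow'.trans hshape'.symm, hshape'⟩

theorem isZpIndex_of_repr_bas_mul_bas_ne_zero (hm : ∀ k, 0 < m k) {i i' j : DJMIndex Λ}
    (hi : IsZpIndex P i) (hi' : IsZpIndex P i') (h : SA.bas.repr (SA.bas i * SA.bas i') j ≠ 0) :
    IsZpIndex P j := by
  intro hj
  obtain ⟨hrow', hshape'⟩ := aP_eq_of_repr_bas_mul_bas_ne_zero hm hi h hj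
  rw [colType_eq_of_repr_mul_bas_ne_zero h, hi' hrow', hshape']

variable (SA P)

theorem one_mem_span_zpSet : (1 : SA.carrier) ∈ Submodule.span R (SA.ZpSet P) := by
  rw [zpSet_eq_image, ← SA.phiId_sum]
  refine Submodule.sum_mem _ fun ρ _ => SA.bas.mem_span_image.2 fun j hj => ?_
  have hj := Finsupp.mem_support_iff.1 hj
  have hself : SA.phiId ρ * SA.phiId ρ = SA.phiId ρ := by rw [SA.phiId_mul, if_pos rfl]
  have hrow : j.2.1 = ρ :=
    SA.bas.mem_of_repr_ne_zero (hself ▸ SA.phiId_mul_mem_span ρ (SA.phiId ρ)) hj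
  have hcol : j.2.2.1 = ρ :=
    SA.bas.mem_of_repr_ne_zero (hself ▸ SA.mul_phiId_mem_span (SA.phiId ρ) ρ) hj
  intro hj'
  rwa [hcol, ← hrow]

theorem mul_mem_span_zpSet (hm : ∀ k, 0 < m k) {x y : SA.carrier}
    (hx : x ∈ Submodule.span R (SA.ZpSet P)) (hy : y ∈ Submodule.span R (SA.ZpSet P)) :
    x * y ∈ Submodule.span R (SA.ZpSet P) := by
  rw [zpSet_eq_image] at hx hy ⊢
  refine (Submodule.span_mul_span R _ _).le.trans (Submodule.span_le.2 ?_)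
    (Submodule.mul_mem_mul hx hy)
  rintro _ ⟨_, ⟨i, hi, rfl⟩, _, ⟨i', hi', rfl⟩, rfl⟩
  exact SA.bas.mem_span_image.2 fun j hj =>
    isZpIndex_of_repr_bas_mul_bas_ne_zero hm hi hi' (Finsupp.mem_support_iff.1 hj)

variable {SA P}

theorem exists_left_coeff_of_isZpIndex (hm : ∀ k, 0 < m k) {i : DJMIndex Λ}
    (hi : IsZpIndex P i) (e : SigmaPIdx Λ P) {x : TabOf Λ e.1.1} (hx : x ∈ pIp P e) :
    ∃ c : TabOf Λ e.1.1 → R, (∀ x' ∉ pIp P e, c x' = 0) ∧ ∀ y ∈ pJp P e,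
      SA.bas i * SA.bas (ofTab e.1.1 x y) - ∑ x', c x' • SA.bas (ofTab e.1.1 x' y) ∈
        SA.SpVee P e := by
  obtain ⟨c, hc⟩ := SA.exists_mul_bas_sub_sum_mem_sVee (SA.bas i) e.1.1 x
  refine ⟨fun x' => if x' ∈ pIp P e then c x' else 0, fun x' hx' => if_neg hx', fun y hy => ?_⟩
  simp only [SA.repr_eq_of_sub_sum_mem_sVee (ofTab_injective_left _ y) (fun _ => rfl) (hc y)]
  refine mem_spVee_of_repr_ne_zero fun j hj => ?_
  rw [SA.bas.repr_sub_sum_ite_repr_smul (ofTab_injective_left _ y)] at hj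
  obtain ⟨hjK, hj⟩ := Set.indicator_apply_ne_zero.1 hj
  refine ⟨isZpIndex_of_repr_bas_mul_bas_ne_zero hm hi (isZpIndex_ofTab hx hy) hj, ?_⟩
  rcases eq_ofTab_or_sDominates_of_repr_mul_bas_ne_zero hj with ⟨x', rfl⟩ | hdom
  · have hx' : x' ∉ pIp P e := fun hx' => hjK ⟨x', hx', rfl⟩
    rw [mem_pIp_iff] at hx hx'
    cases he : e.1.2 with
    | false =>
      rw [he] at hx'
      exact Or.inr ⟨rfl, by simpa [sigmaPIdxOf] using hx', he⟩
    | true =>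
      -- `a_p(x') = a_p(λ)` propagates back to `a_p(x) = a_p(λ)`, but `x ∈ I^p(λ,1)`
      rw [he] at hx hx'
      have hrow := (aP_eq_of_repr_bas_mul_bas_ne_zero hm hi hj (by simpa using hx')).1
      simp [hrow] at hx
  · exact Or.inl hdom

theorem exists_right_coeff_of_isZpIndex (hm : ∀ k, 0 < m k) {i : DJMIndex Λ}
    (hi : IsZpIndex P i) (e : SigmaPIdx Λ P) {y : TabOf Λ e.1.1} (hy : y ∈ pJp P e) :
    ∃ c : TabOf Λ e.1.1 → R, (∀ y' ∉ pJp P e, c y' = 0) ∧ ∀ x ∈ pIp P e,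
      SA.bas (ofTab e.1.1 x y) * SA.bas i - ∑ y', c y' • SA.bas (ofTab e.1.1 x y') ∈
        SA.SpVee P e := by
  obtain ⟨c, hc⟩ := SA.exists_bas_mul_sub_sum_mem_sVee (SA.bas i) e.1.1 y
  refine ⟨fun y' => if y' ∈ pJp P e then c y' else 0, fun y' hy' => if_neg hy', fun x hx => ?_⟩
  simp only [SA.repr_eq_of_sub_sum_mem_sVee (ofTab_injective_right _ x) (fun _ => rfl) (hc x)]
  refine mem_spVee_of_repr_ne_zero fun j hj => ?_
  rw [SA.bas.repr_sub_sum_ite_repr_smul (ofTab_injective_right _ x)] at hj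
  obtain ⟨hjK, hj⟩ := Set.indicator_apply_ne_zero.1 hj
  have hzp := isZpIndex_of_repr_bas_mul_bas_ne_zero hm (isZpIndex_ofTab hx hy) hi hj
  refine ⟨hzp, ?_⟩
  rcases eq_ofTab_or_sDominates_of_repr_bas_mul_ne_zero hj with ⟨y', rfl⟩ | hdom
  · have hy' : y' ∉ pJp P e := fun hy' => hjK ⟨y', hy', rfl⟩
    -- `φ_{x,y'} ∈ Z^p` with `x ∈ T₀^p(λ)` forces `y' ∈ T₀^p(λ) = J^p(λ,0)`
    have he : e.1.2 = false := by simpa using fun h => hy' (Or.inl h)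
    rw [mem_pIp_iff, he] at hx
    exact absurd (Or.inr (hzp (by simpa using hx))) hy'
  · exact Or.inl hdom

theorem exists_left_coeff (hm : ∀ k, 0 < m k) {φ : SA.carrier}
    (hφ : φ ∈ Submodule.span R (SA.ZpSet P)) (e : SigmaPIdx Λ P) {x : TabOf Λ e.1.1}
    (hx : x ∈ pIp P e) :
    ∃ c : TabOf Λ e.1.1 → R, (∀ x' ∉ pIp P e, c x' = 0) ∧ ∀ y ∈ pJp P e,
      φ * SA.bas (ofTab e.1.1 x y) - ∑ x', c x' • SA.bas (ofTab e.1.1 x' y) ∈ SA.SpVee P e := by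
  rw [zpSet_eq_image] at hφ
  refine exists_coeff_sub_sum_mem_of_mem_span
    (fun y => LinearMap.mulRight R (SA.bas (ofTab e.1.1 x y)))
    (fun y x' => SA.bas (ofTab e.1.1 x' y)) _ _ _ ?_ hφ
  rintro _ ⟨i, hi, rfl⟩
  exact exists_left_coeff_of_isZpIndex hm hi e hx

theorem exists_right_coeff (hm : ∀ k, 0 < m k) {φ : SA.carrier}
    (hφ : φ ∈ Submodule.span R (SA.ZpSet P)) (e : SigmaPIdx Λ P) {y : TabOf Λ e.1.1}
    (hy : y ∈ pJp P e) :
    ∃ c : TabOf Λ e.1.1 → R, (∀ y' ∉ pJp P e, c y' = 0) ∧ ∀ x ∈ pIp P e,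
      SA.bas (ofTab e.1.1 x y) * φ - ∑ y', c y' • SA.bas (ofTab e.1.1 x y') ∈ SA.SpVee P e := by
  rw [zpSet_eq_image] at hφ
  refine exists_coeff_sub_sum_mem_of_mem_span
    (fun x => LinearMap.mulLeft R (SA.bas (ofTab e.1.1 x y)))
    (fun x y' => SA.bas (ofTab e.1.1 x y')) _ _ _ ?_ hφ
  rintro _ ⟨i, hi, rfl⟩
  exact exists_right_coeff_of_isZpIndex hm hi e hy

end SchurAlgebra

theorem Sp_is_standardly_based_general
    {R : Type} [CommRing R] [IsDomain R] {n r g : ℕ} {m : Fin r → ℕ}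
    (hm : ∀ k, 0 < m k)
    {Λ : Finset (MultiComp n r m)}
    (SA : SchurAlgebra R Λ) (P : BlockCtx r g) :
    -- `S^p` contains the identity element and is closed under multiplication
    ((1 : SA.carrier) ∈ Submodule.span R (SA.ZpSet P) ∧
      ∀ x ∈ Submodule.span R (SA.ZpSet P), ∀ y ∈ Submodule.span R (SA.ZpSet P),
        x * y ∈ Submodule.span R (SA.ZpSet P)) ∧
    -- `Z^p` is the disjoint union of the sets `Z^p(ε)`, `ε ∈ Σ^p`
    (SA.ZpSet P = ⋃ e : SigmaPIdx Λ P, SA.ZpAt P e) ∧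
    (∀ e f : SigmaPIdx Λ P, e ≠ f → SA.ZpAt P e ∩ SA.ZpAt P f = ∅) ∧
    -- left standardly based property: for `φ ∈ S^p` and `φ_{S,T} ∈ Z^p(ε)`,
    -- `φ ⬝ φ_{S,T} ≡ ∑_{S' ∈ I^p(ε)} f_{S'} φ_{S',T} mod (S^p)^{∨ε}`, with
    -- coefficients `f_{S'}` depending only on `(φ, S, S')` and not on `T`
    (∀ phi ∈ Submodule.span R (SA.ZpSet P), ∀ (e : SigmaPIdx Λ P),
      ∀ S ∈ pIp P e,
        ∃ c : TabOf Λ e.1.1 → R, (∀ x, x ∉ pIp P e → c x = 0) ∧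
          ∀ T ∈ pJp P e,
            phi * SA.bas ⟨e.1.1, S.1, T.1, (S.2, T.2)⟩ -
                ∑ S' : TabOf Λ e.1.1, c S' • SA.bas ⟨e.1.1, S'.1, T.1, (S'.2, T.2)⟩
              ∈ SA.SpVee P e) ∧
    -- right standardly based property: `φ_{S,T} ⬝ φ ≡ ∑_{T' ∈ J^p(ε)} f'_{T'}
    -- φ_{S,T'} mod (S^p)^{∨ε}`, with coefficients depending only on
    -- `(φ, T, T')` and not on `S`
    (∀ phi ∈ Submodule.span R (SA.ZpSet P), ∀ (e : SigmaPIdx Λ P),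
      ∀ T ∈ pJp P e,
        ∃ c : TabOf Λ e.1.1 → R, (∀ x, x ∉ pJp P e → c x = 0) ∧
          ∀ S ∈ pIp P e,
            SA.bas ⟨e.1.1, S.1, T.1, (S.2, T.2)⟩ * phi -
                ∑ T' : TabOf Λ e.1.1, c T' • SA.bas ⟨e.1.1, S.1, T'.1, (S.2, T'.2)⟩
              ∈ SA.SpVee P e) :=
  ⟨⟨SA.one_mem_span_zpSet P, fun _ hx _ hy => SA.mul_mem_span_zpSet P hm hx hy⟩,
    SA.zpSet_eq_iUnion_zpAt P, fun _ _ => SA.zpAt_inter_zpAt_eq_empty P,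
    fun _ hφ e _ hS => SchurAlgebra.exists_left_coeff hm hφ e hS,
    fun _ hφ e _ hT => SchurAlgebra.exists_right_coeff hm hφ e hT⟩

theorem Sp_is_standardly_based
    {R : Type} [CommRing R] [IsDomain R] {n r g : ℕ} {m : Fin r → ℕ}
    (hn : 0 < n) (hr : 0 < r) (hm : ∀ k, 0 < m k)
    {Λ : Finset (MultiComp n r m)} (hΛ : Saturated Λ)
    (SA : SchurAlgebra R Λ) (P : BlockCtx r g) :
    -- `S^p` contains the identity element and is closed under multiplication
    ((1 : SA.carrier) ∈ Submodule.span R (SA.ZpSet P) ∧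
      ∀ x ∈ Submodule.span R (SA.ZpSet P), ∀ y ∈ Submodule.span R (SA.ZpSet P),
        x * y ∈ Submodule.span R (SA.ZpSet P)) ∧
    -- `Z^p` is the disjoint union of the sets `Z^p(ε)`, `ε ∈ Σ^p`
    (SA.ZpSet P = ⋃ e : SigmaPIdx Λ P, SA.ZpAt P e) ∧
    (∀ e f : SigmaPIdx Λ P, e ≠ f → SA.ZpAt P e ∩ SA.ZpAt P f = ∅) ∧
    -- left standardly based property: for `φ ∈ S^p` and `φ_{S,T} ∈ Z^p(ε)`,
    -- `φ ⬝ φ_{S,T} ≡ ∑_{S' ∈ I^p(ε)} f_{S'} φ_{S',T} mod (S^p)^{∨ε}`, with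
    -- coefficients `f_{S'}` depending only on `(φ, S, S')` and not on `T`
    (∀ phi ∈ Submodule.span R (SA.ZpSet P), ∀ (e : SigmaPIdx Λ P),
      ∀ S ∈ pIp P e,
        ∃ c : TabOf Λ e.1.1 → R, (∀ x, x ∉ pIp P e → c x = 0) ∧
          ∀ T ∈ pJp P e,
            phi * SA.bas ⟨e.1.1, S.1, T.1, (S.2, T.2)⟩ -
                ∑ S' : TabOf Λ e.1.1, c S' • SA.bas ⟨e.1.1, S'.1, T.1, (S'.2, T.2)⟩
              ∈ SA.SpVee P e) ∧
    -- right standardly based property: `φ_{S,T} ⬝ φ ≡ ∑_{T' ∈ J^p(ε)} f'_{T'}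
    -- φ_{S,T'} mod (S^p)^{∨ε}`, with coefficients depending only on
    -- `(φ, T, T')` and not on `S`
    (∀ phi ∈ Submodule.span R (SA.ZpSet P), ∀ (e : SigmaPIdx Λ P),
      ∀ T ∈ pJp P e,
        ∃ c : TabOf Λ e.1.1 → R, (∀ x, x ∉ pJp P e → c x = 0) ∧
          ∀ S ∈ pIp P e,
            SA.bas ⟨e.1.1, S.1, T.1, (S.2, T.2)⟩ * phi -
                ∑ T' : TabOf Λ e.1.1, c T' • SA.bas ⟨e.1.1, S.1, T'.1, (S.2, T'.2)⟩
              ∈ SA.SpVee P e) :=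
  Sp_is_standardly_based_general hm SA P
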